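/- arXiv:0906.2923 — 3 statements merged into one kernel-verified Lean document; each statement's English description precedes it below -/
import Mathlib

section
/- Define f : [1, ∞) → ℝ by f(x) = Σ_{n=1}^∞ (1/n)·#{p prime : p^n ≤ x} (a finite sum for each x). Then for every s ∈ ℂ with Re(s) > 1, Σ_p Σ_{n=1}^∞ (1/n)·p^{-ns} = s · ∫_1^∞ f(x)·x^{-s-1} dx, where the outer sum on the left ranges over the primes p. -/
/-- Riemann's weighted prime-power counting function
`f(x) = ∑_{n≥1} (1/n) · #{p prime : p^n ≤ x}`. -/
noncomputable def riemannPrimeCount (x : ℝ) : ℝ :=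
  ∑' n : ℕ, (1 / ((n : ℝ) + 1)) *
    ({p : ℕ | p.Prime ∧ ((p : ℝ)) ^ (n + 1) ≤ x}.ncard : ℝ)

/-!
Each prime power `q = p ^ n` contributes `(1 / n) q ^ (-s) = s ∫_q^∞ (1 / n) x ^ (-s - 1) dx`.
Summing over all pairs `(p, n)` and exchanging sum and integral, which the absolute convergence
of `∑ q ^ (-Re s)` permits, the integrand becomes `f(x) x ^ (-s - 1)`, because `f(x)` is the
weighted count of the prime powers `q ≤ x`.
-/

open MeasureTheory Set

section AbelSummation

variable {s : ℂ}

lemma re_neg_sub_one_lt_neg_one (hs : 0 < s.re) : (-s - 1).re < -1 := by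
  simp only [Complex.sub_re, Complex.neg_re, Complex.one_re]
  linarith

lemma integral_Ioi_cpow_neg_sub_one {a : ℝ} (ha : 0 < a) (hs : 0 < s.re) :
    ∫ x in Ioi a, (x : ℂ) ^ (-s - 1) = (a : ℂ) ^ (-s) / s := by
  rw [integral_Ioi_cpow_of_lt (re_neg_sub_one_lt_neg_one hs) ha, sub_add_cancel, neg_div_neg_eq]

lemma integral_Ioi_norm_cpow_neg_sub_one {a : ℝ} (ha : 0 < a) (hs : 0 < s.re) :
    ∫ x in Ioi a, ‖(x : ℂ) ^ (-s - 1)‖ = a ^ (-s.re) / s.re := by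
  rw [setIntegral_congr_fun measurableSet_Ioi
      fun x hx => Complex.norm_cpow_eq_rpow_re_of_pos (ha.trans hx) _]
  rw [integral_Ioi_rpow_of_lt (re_neg_sub_one_lt_neg_one hs) ha]
  simp [neg_div_neg_eq]

lemma setIntegral_Ioi_indicator_Ici {E : Type*} [NormedAddCommGroup E] [NormedSpace ℝ E]
    {a b : ℝ} (hba : b < a) (f : ℝ → E) :
    ∫ x in Ioi b, (Ici a).indicator f x = ∫ x in Ioi a, f x := by
  rw [setIntegral_indicator measurableSet_Ici,
    inter_eq_right.mpr (Ici_subset_Ioi.mpr hba), integral_Ici_eq_integral_Ioi]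

lemma integrableOn_Ioi_indicator_Ici_iff {E : Type*} [NormedAddCommGroup E]
    {a b : ℝ} (hba : b < a) {f : ℝ → E} :
    IntegrableOn ((Ici a).indicator f) (Ioi b) ↔ IntegrableOn f (Ioi a) := by
  rw [IntegrableOn, integrable_indicator_iff measurableSet_Ici, IntegrableOn,
    Measure.restrict_restrict measurableSet_Ici, inter_eq_left.mpr (Ici_subset_Ioi.mpr hba)]
  exact integrableOn_Ici_iff_integrableOn_Ioi

theorem tsum_mul_cpow_neg_eq_mul_integral {ι : Type*} [Countable ι] {a : ι → ℝ} {c : ι → ℂ}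
    {b : ℝ} (hb : 0 ≤ b) (hba : ∀ i, b < a i) (hs : 0 < s.re)
    (hc : Summable fun i => ‖c i‖ * a i ^ (-s.re)) :
    ∑' i, c i * (a i : ℂ) ^ (-s) =
      s * ∫ x in Ioi b, (∑' i, (Ici (a i)).indicator (fun _ => c i) x) * (x : ℂ) ^ (-s - 1) := by
  have ha i : 0 < a i := hb.trans_lt (hba i)
  set F : ι → ℝ → ℂ := fun i => (Ici (a i)).indicator fun x => c i * (x : ℂ) ^ (-s - 1)
  have hF_int i : IntegrableOn (F i) (Ioi b) :=
    (integrableOn_Ioi_indicator_Ici_iff (hba i)).mpr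
      ((integrableOn_Ioi_cpow_of_lt (re_neg_sub_one_lt_neg_one hs) (ha i)).const_mul _)
  have hF_integral i : ∫ x in Ioi b, F i x = c i * (a i : ℂ) ^ (-s) / s := by
    rw [setIntegral_Ioi_indicator_Ici (hba i), integral_const_mul,
      integral_Ioi_cpow_neg_sub_one (ha i) hs, mul_div_assoc]
  have hF_norm i : ∫ x in Ioi b, ‖F i x‖ = ‖c i‖ * a i ^ (-s.re) / s.re := by
    simp_rw [F, norm_indicator_eq_indicator_norm, norm_mul]
    rw [setIntegral_Ioi_indicator_Ici (hba i), integral_const_mul,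
      integral_Ioi_norm_cpow_neg_sub_one (ha i) hs, mul_div_assoc]
  have hF_sum x : ∑' i, F i x =
      (∑' i, (Ici (a i)).indicator (fun _ => c i) x) * (x : ℂ) ^ (-s - 1) := by
    rw [← tsum_mul_right]
    exact tsum_congr fun i => indicator_mul_left _ _ _
  have hs0 : s ≠ 0 := fun h => by simp [h] at hs
  calc ∑' i, c i * (a i : ℂ) ^ (-s) = s * ∑' i, ∫ x in Ioi b, F i x := by
        simp_rw [hF_integral, ← tsum_mul_left, mul_div_cancel₀ _ hs0]
    _ = s * ∫ x in Ioi b, ∑' i, F i x := by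
        rw [integral_tsum_of_summable_integral_norm hF_int]
        simpa only [hF_norm] using hc.div_const s.re
    _ = _ := by simp_rw [hF_sum]

end AbelSummation

lemma tsum_subtype_indicator_const {β G : Type*} [TopologicalSpace G] [AddCommGroup G]
    [IsTopologicalAddGroup G] [T2Space G] (s t : Set β) (c : G) :
    ∑' x : s, t.indicator (fun _ => c) x = (s ∩ t).ncard • c := by
  rw [tsum_subtype, indicator_indicator, ← tsum_subtype, tsum_const, Nat.card_coe_set_eq]

namespace Nat.Primes

lemma injective_pow_succ : Function.Injective fun i : Nat.Primes × ℕ => (i.1 : ℕ) ^ (i.2 + 1) :=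
  Subtype.val_injective.comp prodNatEquiv.injective

lemma finite_setOf_pow_succ_le (x : ℝ) :
    {i : Nat.Primes × ℕ | ((i.1 : ℕ) : ℝ) ^ (i.2 + 1) ≤ x}.Finite := by
  refine ((finite_Iic ⌊x⌋₊).preimage injective_pow_succ.injOn).subset fun i hi => ?_
  exact Nat.le_floor (by exact_mod_cast hi)

lemma summable_pow_succ_rpow_neg {σ : ℝ} (hσ : 1 < σ) :
    Summable fun i : Nat.Primes × ℕ => (((i.1 : ℕ) : ℝ) ^ (i.2 + 1)) ^ (-σ) := by
  simpa only [Function.comp_def, Nat.cast_pow] using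
    (Real.summable_nat_rpow.mpr (neg_lt_neg hσ)).comp_injective injective_pow_succ

end Nat.Primes

lemma riemannPrimeCount_eq_tsum_indicator (x : ℝ) :
    riemannPrimeCount x = ∑' i : Nat.Primes × ℕ,
      (Ici (((i.1 : ℕ) : ℝ) ^ (i.2 + 1))).indicator (fun _ => 1 / ((i.2 : ℝ) + 1)) x := by
  set g : Nat.Primes × ℕ → ℝ := fun i =>
    (Ici (((i.1 : ℕ) : ℝ) ^ (i.2 + 1))).indicator (fun _ => 1 / ((i.2 : ℝ) + 1)) x
  have hg : Summable g := summable_of_hasFiniteSupport <|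
    (Nat.Primes.finite_setOf_pow_succ_le x).subset fun i hi => by
      by_contra h
      exact hi (indicator_of_notMem (s := Ici _) h _)
  rw [hg.tsum_prod, ← Summable.tsum_comm (f := fun p k => g (p, k)) hg, riemannPrimeCount]
  refine tsum_congr fun k => ?_
  have hg_k (p : Nat.Primes) :
      g (p, k) = {n : ℕ | (n : ℝ) ^ (k + 1) ≤ x}.indicator (fun _ => 1 / ((k : ℝ) + 1)) p := by
    simp [g, indicator_apply]
  calc _ = ({p : ℕ | p.Prime} ∩ {n : ℕ | (n : ℝ) ^ (k + 1) ≤ x}).ncard • (1 / ((k : ℝ) + 1)) := by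
        rw [nsmul_eq_mul, mul_comm]; rfl
    _ = _ := (tsum_subtype_indicator_const _ _ _).symm.trans (tsum_congr hg_k).symm

/-- For `Re s > 1`, `log ζ(s) = ∑_p ∑_{n≥1} (1/n) p^{-ns} = s ∫_1^∞ f(x) x^{-s-1} dx`,
where `f` is Riemann's weighted prime-power counting function. -/
theorem log_zeta_eq_integral_primeCount (s : ℂ) (hs : 1 < s.re) :
    (∑' x : Nat.Primes × ℕ,
        (1 / ((x.2 : ℂ) + 1)) * ((x.1 : ℕ) : ℂ) ^ (-(((x.2 : ℂ) + 1) * s))) =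
      s * ∫ x in Set.Ioi (1 : ℝ), (riemannPrimeCount x : ℂ) * (x : ℂ) ^ (-s - 1) := by
  have hpow (i : Nat.Primes × ℕ) : ((i.1 : ℕ) : ℂ) ^ (-(((i.2 : ℂ) + 1) * s)) =
      ((((i.1 : ℕ) : ℝ) ^ (i.2 + 1) : ℝ) : ℂ) ^ (-s) := by
    rw [show -(((i.2 : ℂ) + 1) * s) = ((i.2 + 1 : ℕ) : ℂ) * -s by push_cast; ring,
      Complex.natCast_cpow_natCast_mul]
    push_cast; rfl
  have hc : Summable fun i : Nat.Primes × ℕ =>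
      ‖1 / ((i.2 : ℂ) + 1)‖ * (((i.1 : ℕ) : ℝ) ^ (i.2 + 1)) ^ (-s.re) := by
    refine (Nat.Primes.summable_pow_succ_rpow_neg hs).of_nonneg_of_le (fun i => by positivity)
      fun i => mul_le_of_le_one_left (by positivity) ?_
    rw [norm_div, norm_one, ← Nat.cast_succ, Complex.norm_natCast]
    exact div_le_one_of_le₀ (by simp) (by positivity)
  have hlt (i : Nat.Primes × ℕ) : (1 : ℝ) < ((i.1 : ℕ) : ℝ) ^ (i.2 + 1) :=
    one_lt_pow₀ (by exact_mod_cast i.1.prop.one_lt) (Nat.succ_ne_zero _)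
  simp_rw [hpow]
  rw [tsum_mul_cpow_neg_eq_mul_integral zero_le_one hlt (by linarith) hc]
  congr! 4 with x
  rw [riemannPrimeCount_eq_tsum_indicator, Complex.ofReal_tsum]
  exact tsum_congr fun i => by simp [indicator_apply, apply_ite Complex.ofReal]
end

section
/- For every real σ with -2 < σ < 1, the value ζ(σ) of the Riemann zeta function is real and strictly negative. -/
open Complex
open scoped ComplexOrder Real

/-!
Work in the complex order, where `z < 0` means that `z` is a negative real.

For `0 < σ < 1` use the Dirichlet eta function, summed in pairs
`(2k+1)^(-s) - (2k+2)^(-s)`. By the mean value theorem a pair is `O(|s| k^(-re s - 1))`, so the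
series is holomorphic on `re s > 0`. It equals `(1 - 2^(1-s)) ζ(s)` for `re s > 1`, and so on
the whole connected punctured half-plane. At real `σ > 0` every pair is positive, while
`1 - 2^(1-σ) < 0` for `σ < 1`. For `-2 < σ < 0` the functional equation writes `ζ(σ)` as
`ζ(1-σ) > 0` times positive factors and `cos(π(1-σ)/2) < 0`. Finally `ζ(0) = -1/2`.
-/

noncomputable def etaPairTerm (k : ℕ) (s : ℂ) : ℂ :=
  ((2 * k + 1 : ℝ) : ℂ) ^ (-s) - ((2 * k + 2 : ℝ) : ℂ) ^ (-s)

noncomputable def dirichletEta (s : ℂ) : ℂ := ∑' k, etaPairTerm k s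

theorem norm_ofReal_cpow_neg_sub_le {a : ℝ} (ha : 0 < a) {s : ℂ} (hs : -1 ≤ s.re) :
    ‖(a : ℂ) ^ (-s) - ((a + 1 : ℝ) : ℂ) ^ (-s)‖ ≤ ‖s‖ * a ^ (-s.re - 1) := by
  rcases eq_or_ne s 0 with rfl | hs0
  · simp
  have hderiv : ∀ x ∈ Set.Icc a (a + 1), HasDerivWithinAt (fun y : ℝ => (y : ℂ) ^ (-s))
      (-s * (x : ℂ) ^ (-s - 1)) (Set.Icc a (a + 1)) x := fun x hx =>
    (hasDerivAt_ofReal_cpow_const (ha.trans_le hx.1).ne' (neg_ne_zero.mpr hs0)).hasDerivWithinAt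
  have hbound : ∀ x ∈ Set.Icc a (a + 1),
      ‖-s * (x : ℂ) ^ (-s - 1)‖ ≤ ‖s‖ * a ^ (-s.re - 1) := by
    intro x hx
    rw [norm_mul, norm_neg, norm_cpow_eq_rpow_re_of_pos (ha.trans_le hx.1)]
    gcongr
    exact Real.rpow_le_rpow_of_nonpos ha hx.1 (by simp only [sub_re, neg_re, one_re]; linarith)
  have := (convex_Icc a (a + 1)).norm_image_sub_le_of_norm_hasDerivWithin_le hderiv hbound
    (Set.left_mem_Icc.mpr (by linarith)) (Set.right_mem_Icc.mpr (by linarith))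
  simpa [norm_sub_rev] using this

theorem norm_etaPairTerm_le {δ : ℝ} (hδ : -1 ≤ δ) (k : ℕ) {s : ℂ} (hs : δ ≤ s.re) :
    ‖etaPairTerm k s‖ ≤ ‖s‖ * (2 * k + 1 : ℝ) ^ (-δ - 1) := by
  calc ‖etaPairTerm k s‖ ≤ ‖s‖ * (2 * k + 1 : ℝ) ^ (-s.re - 1) := by
        have := norm_ofReal_cpow_neg_sub_le (a := 2 * k + 1) (by positivity) (hδ.trans hs)
        rwa [show (2 * k + 1 + 1 : ℝ) = 2 * k + 2 by ring] at this
    _ ≤ ‖s‖ * (2 * k + 1 : ℝ) ^ (-δ - 1) := by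
        gcongr
        exact le_add_of_nonneg_left (by positivity)

theorem summable_two_mul_add_one_rpow {p : ℝ} (hp : p < -1) :
    Summable fun k : ℕ => (2 * k + 1 : ℝ) ^ p := by
  refine .of_nonneg_of_le (fun k => by positivity) (fun k => ?_)
    ((summable_nat_add_iff 1).mpr (Real.summable_nat_rpow.mpr hp))
  push_cast
  exact Real.rpow_le_rpow_of_nonpos (by positivity) (by linarith [k.cast_nonneg (α := ℝ)])
    (by linarith)

theorem differentiable_etaPairTerm (k : ℕ) : Differentiable ℂ (etaPairTerm k) := fun _ =>
  .sub (differentiableAt_neg_iff.mpr differentiableAt_id |>.const_cpow (.inl (by norm_cast)))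
    (differentiableAt_neg_iff.mpr differentiableAt_id |>.const_cpow (.inl (by norm_cast)))

theorem differentiableOn_dirichletEta : DifferentiableOn ℂ dirichletEta {s | 0 < s.re} := by
  intro s (hs : 0 < s.re)
  set U := {z : ℂ | s.re / 2 < z.re} ∩ Metric.ball 0 (‖s‖ + 1)
  have hU : IsOpen U := (isOpen_lt continuous_const continuous_re).inter Metric.isOpen_ball
  have hsU : s ∈ U := ⟨show s.re / 2 < s.re by linarith, by simp⟩
  have hδ : 0 < s.re / 2 := by positivity
  have hηU : DifferentiableOn ℂ dirichletEta U :=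
    differentiableOn_tsum_of_summable_norm
      ((summable_two_mul_add_one_rpow (p := -(s.re / 2) - 1) (by linarith)).mul_left (‖s‖ + 1))
      (fun k => (differentiable_etaPairTerm k).differentiableOn) hU fun k z hz =>
        (norm_etaPairTerm_le (by linarith) k hz.1.le).trans <| by
          gcongr
          exact (mem_ball_zero_iff.mp hz.2).le
  exact (hηU.differentiableAt (hU.mem_nhds hsU)).differentiableWithinAt

theorem dirichletEta_eq_of_one_lt_re {s : ℂ} (hs : 1 < s.re) :
    dirichletEta s = (1 - 2 ^ (1 - s)) * riemannZeta s := by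
  set f : ℕ → ℂ := fun n => ((n + 1 : ℝ) : ℂ) ^ (-s)
  have hf : Summable f := by
    refine ((summable_nat_add_iff 1).mpr (Complex.summable_one_div_nat_cpow.mpr hs)).congr
      fun n => ?_
    simp [f, cpow_neg]
  have hζ : riemannZeta s = ∑' n, f n := by
    rw [zeta_eq_tsum_one_div_nat_add_one_cpow hs]
    exact tsum_congr fun n => by simp [f, cpow_neg]
  have heven : Summable fun k => f (2 * k) := hf.comp_injective (fun a b h => by simpa using h)
  have hodd : Summable fun k => f (2 * k + 1) :=
    hf.comp_injective (fun a b h => by simpa using h)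
  have hsplit := tsum_even_add_odd heven hodd
  have hoddζ : ∑' k, f (2 * k + 1) = 2 ^ (-s) * riemannZeta s := by
    rw [hζ, ← tsum_mul_left]
    refine tsum_congr fun k => ?_
    simp only [f]
    rw [show ((2 * k + 1 : ℕ) : ℝ) + 1 = 2 * ((k : ℝ) + 1) by push_cast; ring, ofReal_mul,
      mul_cpow_ofReal_nonneg zero_le_two (by positivity)]
    norm_num
  have hη : dirichletEta s = ∑' k, f (2 * k) - ∑' k, f (2 * k + 1) := by
    rw [← heven.tsum_sub hodd]
    exact tsum_congr fun k => by simp only [etaPairTerm, f]; push_cast; ring_nf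
  have h2 : (2 : ℂ) ^ (1 - s) = 2 * 2 ^ (-s) := by
    rw [sub_eq_add_neg, cpow_add _ _ two_ne_zero, cpow_one]
  rw [hη]
  linear_combination hsplit - hζ - 2 * hoddζ + riemannZeta s * h2

theorem isPreconnected_setOf_re_pos_ne_one : IsPreconnected {s : ℂ | 0 < s.re ∧ s ≠ 1} := by
  have hconv : ∀ {A B : Set ℂ}, Convex ℝ A → Convex ℝ B → IsPreconnected (A ∩ B) :=
    fun hA hB => (hA.inter hB).isPreconnected
  have hupper := hconv (convex_halfSpace_re_gt 0) (convex_halfSpace_im_gt 0)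
  have hlower := hconv (convex_halfSpace_re_gt 0) (convex_halfSpace_im_lt 0)
  have hstrip := hconv (convex_halfSpace_re_gt 0) (convex_halfSpace_re_lt 1)
  have hright := (convex_halfSpace_re_gt 1).isPreconnected
  have hunion := (((hupper.union (1 / 2 + I) (by simp) (by norm_num) hstrip).union (1 / 2 - I)
    (by norm_num) (by simp) hlower).union (2 + I) (by simp) (by norm_num) hright)
  convert hunion using 1
  ext z
  simp only [Set.mem_ofPred_eq, Set.mem_union, Set.mem_inter_iff, ne_eq, Complex.ext_iff,
    one_re, one_im]
  constructor
  · rintro ⟨hre, hne⟩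
    rcases lt_trichotomy z.im 0 with h | h | h
    · exact .inl (.inr ⟨hre, h⟩)
    · rcases lt_or_gt_of_ne (fun h' => hne ⟨h', h⟩) with h1 | h1
      · exact .inl (.inl (.inr ⟨hre, h1⟩))
      · exact .inr h1
    · exact .inl (.inl (.inl ⟨hre, h⟩))
  · rintro (((⟨hre, h⟩ | ⟨hre, h⟩) | ⟨hre, h⟩) | h)
    · exact ⟨hre, fun h' => h.ne' h'.2⟩
    · exact ⟨hre, fun h' => h.ne h'.1⟩
    · exact ⟨hre, fun h' => h.ne h'.2⟩
    · exact ⟨by linarith, fun h' => h.ne' h'.1⟩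

theorem dirichletEta_eq {s : ℂ} (hs : 0 < s.re) (hs1 : s ≠ 1) :
    dirichletEta s = (1 - 2 ^ (1 - s)) * riemannZeta s := by
  set Ω := {s : ℂ | 0 < s.re ∧ s ≠ 1}
  have hΩ : IsOpen Ω := (isOpen_lt continuous_const continuous_re).and isOpen_ne
  have hη : AnalyticOnNhd ℂ dirichletEta Ω :=
    (differentiableOn_dirichletEta.mono fun _ hz => hz.1).analyticOnNhd hΩ
  have hζ : AnalyticOnNhd ℂ (fun z => (1 - 2 ^ (1 - z)) * riemannZeta z) Ω := by
    refine DifferentiableOn.analyticOnNhd (fun z hz => ?_) hΩ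
    refine (DifferentiableAt.mul ?_ (differentiableAt_riemannZeta hz.2)).differentiableWithinAt
    fun_prop
  have hagree : dirichletEta =ᶠ[nhds 2] fun z => (1 - 2 ^ (1 - z)) * riemannZeta z := by
    filter_upwards [(isOpen_lt continuous_const continuous_re).mem_nhds
      (show (1 : ℝ) < (2 : ℂ).re by norm_num)] with z hz using dirichletEta_eq_of_one_lt_re hz
  exact hη.eqOn_of_preconnected_of_eventuallyEq hζ isPreconnected_setOf_re_pos_ne_one
    (by norm_num [Ω]) hagree ⟨hs, hs1⟩

theorem dirichletEta_ofReal_pos {σ : ℝ} (hσ : 0 < σ) : 0 < dirichletEta σ := by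
  set r : ℕ → ℝ := fun k => (2 * k + 1 : ℝ) ^ (-σ) - (2 * k + 2 : ℝ) ^ (-σ)
  have hterm : ∀ k, etaPairTerm k σ = r k := fun k => by
    rw [etaPairTerm, ← ofReal_neg, ← ofReal_cpow (by positivity),
      ← ofReal_cpow (by positivity), ← ofReal_sub]
  have hpos : ∀ k, 0 < r k := fun k =>
    sub_pos.mpr (Real.rpow_lt_rpow_of_neg (by positivity) (by linarith) (by linarith))
  have hsum : Summable r := by
    refine summable_ofReal.mp ((Summable.of_norm_bounded
      ((summable_two_mul_add_one_rpow (p := -σ - 1) (by linarith)).mul_left ‖(σ : ℂ)‖)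
      fun k => norm_etaPairTerm_le (by linarith) k (by simp)).congr hterm)
  rw [dirichletEta, tsum_congr hterm, ← ofReal_tsum, zero_lt_real]
  exact hsum.tsum_pos (fun k => (hpos k).le) 0 (hpos 0)

theorem riemannZeta_neg_of_pos_of_lt_one {σ : ℝ} (h0 : 0 < σ) (h1 : σ < 1) :
    riemannZeta σ < 0 := by
  have hfactor : 1 - (2 : ℝ) ^ (1 - σ) < 0 :=
    sub_neg.mpr (Real.one_lt_rpow one_lt_two (by linarith))
  have hcast : ((1 - (2 : ℝ) ^ (1 - σ) : ℝ) : ℂ) = 1 - 2 ^ (1 - (σ : ℂ)) := by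
    norm_num [ofReal_cpow zero_le_two]
  have hζ : riemannZeta σ = ((1 - (2 : ℝ) ^ (1 - σ))⁻¹ : ℝ) * dirichletEta σ := by
    rw [dirichletEta_eq (by simpa) (by exact_mod_cast h1.ne), ofReal_inv, hcast,
      inv_mul_cancel_left₀ (hcast ▸ ofReal_ne_zero.mpr hfactor.ne)]
  rw [hζ]
  exact mul_neg_of_neg_of_pos (by exact_mod_cast inv_lt_zero.mpr hfactor)
    (dirichletEta_ofReal_pos h0)

theorem riemannZeta_neg_of_neg_two_lt_of_neg {σ : ℝ} (h2 : -2 < σ) (h0 : σ < 0) :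
    riemannZeta σ < 0 := by
  set s := 1 - σ
  have hs1 : 1 < s := by linarith
  have hs_ne_neg_nat : ∀ n : ℕ, (s : ℂ) ≠ -n := fun n h => by
    have : s = -n := by exact_mod_cast h
    linarith [n.cast_nonneg (α := ℝ)]
  have hσ : (σ : ℂ) = 1 - (s : ℂ) := by push_cast [s]; ring
  rw [hσ, riemannZeta_one_sub hs_ne_neg_nat (by exact_mod_cast hs1.ne')]
  have hprefactor : (0 : ℂ) < 2 * (2 * π) ^ (-(s : ℂ)) * Gamma s := by
    rw [← ofReal_neg, show (2 * π : ℂ) = ((2 * π : ℝ) : ℂ) by push_cast; rfl,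
      ← ofReal_cpow (by positivity), Gamma_ofReal]
    exact_mod_cast
      mul_pos (mul_pos two_pos (by positivity)) (Real.Gamma_pos_of_pos (by linarith))
  have hcos : cos (π * s / 2) < 0 := by
    rw [show (π * s / 2 : ℂ) = ((π * s / 2 : ℝ) : ℂ) by push_cast; rfl, ← ofReal_cos]
    exact_mod_cast Real.cos_neg_of_pi_div_two_lt_of_lt (by nlinarith [Real.pi_pos])
      (by nlinarith [Real.pi_pos])
  exact mul_neg_of_neg_of_pos (mul_neg_of_pos_of_neg hprefactor hcos)
    (riemannZeta_pos_of_one_lt hs1)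

/-- For real `σ` with `-2 < σ < 1`, the value `ζ(σ)` is real and strictly negative. -/
theorem zeta_real_neg_on_interval (σ : ℝ) (h₁ : -2 < σ) (h₂ : σ < 1) :
    (riemannZeta (σ : ℂ)).im = 0 ∧ (riemannZeta (σ : ℂ)).re < 0 := by
  refine (neg_iff.mp ?_).symm
  rcases lt_trichotomy σ 0 with hneg | rfl | hpos
  · exact riemannZeta_neg_of_neg_two_lt_of_neg h₁ hneg
  · rw [ofReal_zero, riemannZeta_zero]
    norm_num
  · exact riemannZeta_neg_of_pos_of_lt_one hpos h₂
end

section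
/- For every real x > 1, ∫_x^∞ 1/(t·(t² - 1)·log t) dt = Σ_{n=1}^∞ ∫_{2n·log x}^∞ e^{-u}/u du, where the series on the right converges. -/
/-!
For `t > 1`, `1 / (t (t² - 1)) = ∑_{n ≥ 0} t^{-(2n+3)}`, and the substitutions `t = eˢ`,
`u = (2n+2) s` turn `∫_x^∞ dt / (t^{2n+3} log t)` into `Γ(0, (2n+2) log x)`. All terms are
nonnegative and `Γ(0, a) ≤ e^{-a} / a`, so the series of integrals is dominated by a geometric
series; this gives its convergence and justifies exchanging sum and integral.
-/

open Real MeasureTheory Set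

lemma hasSum_one_div_pow_odd {t : ℝ} (ht : 1 < t ^ 2) :
    HasSum (fun n : ℕ => 1 / t ^ (2 * n + 3)) (1 / (t * (t ^ 2 - 1))) := by
  have ht0 : t ≠ 0 := by rintro rfl; norm_num at ht
  have hsub : t ^ 2 - 1 ≠ 0 := sub_ne_zero.2 ht.ne'
  have hterm (n : ℕ) : 1 / t ^ 3 * (t ^ 2)⁻¹ ^ n = 1 / t ^ (2 * n + 3) := by
    rw [inv_pow, ← pow_mul, pow_add]
    field_simp
  have hval : 1 / t ^ 3 * (1 - (t ^ 2)⁻¹)⁻¹ = 1 / (t * (t ^ 2 - 1)) := by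
    field_simp
  rw [← hval, ← funext hterm]
  exact (hasSum_geometric_of_lt_one (by positivity) (inv_lt_one_of_one_lt₀ ht)).mul_left _

lemma integral_exp_neg_mul_div_self {b : ℝ} (hb : 0 < b) (a : ℝ) :
    ∫ s in Ioi a, exp (-b * s) / s = ∫ u in Ioi (b * a), exp (-u) / u := by
  rw [← integral_comp_mul_left_Ioi' _ a hb, smul_eq_mul, ← integral_const_mul]
  refine setIntegral_congr_fun measurableSet_Ioi fun s _ => ?_
  rw [neg_mul, mul_div_assoc', mul_div_mul_left _ _ hb.ne']

lemma one_div_pow_succ_mul_log {t : ℝ} (ht : 0 < t) (k : ℕ) :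
    1 / (t ^ (k + 1) * log t) = t⁻¹ * (exp (-k * log t) / log t) := by
  rw [neg_mul, exp_neg, exp_nat_mul, exp_log ht]
  ring

lemma integral_Ioi_one_div_pow_succ_mul_log {x : ℝ} (hx : 0 < x) {k : ℕ} (hk : 0 < k) :
    ∫ t in Ioi x, 1 / (t ^ (k + 1) * log t) = ∫ u in Ioi (k * log x), exp (-u) / u := by
  rw [← integral_exp_neg_mul_div_self (Nat.cast_pos.2 hk), ← integral_comp_log_Ioi _ hx]
  exact setIntegral_congr_fun measurableSet_Ioi fun t ht =>
    one_div_pow_succ_mul_log (hx.trans ht) k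

lemma integrableOn_exp_neg_mul_div_self {a b : ℝ} (ha : 0 < a) (hb : 0 < b) :
    IntegrableOn (fun s => exp (-b * s) / s) (Ioi a) := by
  refine ((exp_neg_integrableOn_Ioi a hb).div_const a).mono'
    (by fun_prop : Measurable fun s => exp (-b * s) / s).aestronglyMeasurable ?_
  filter_upwards [ae_restrict_mem measurableSet_Ioi] with s hs
  rw [norm_of_nonneg (div_nonneg (exp_pos _).le (ha.trans hs).le)]
  exact div_le_div_of_nonneg_left (exp_pos _).le ha hs.le

lemma integrableOn_one_div_pow_succ_mul_log {x : ℝ} (hx : 1 < x) {k : ℕ} (hk : 0 < k) :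
    IntegrableOn (fun t => 1 / (t ^ (k + 1) * log t)) (Ioi x) := by
  have hx0 : 0 < x := zero_lt_one.trans hx
  refine ((integrableOn_comp_log_Ioi _ hx0).2
    (integrableOn_exp_neg_mul_div_self (log_pos hx) (Nat.cast_pos.2 hk))).congr_fun
    (fun t ht => (one_div_pow_succ_mul_log (hx0.trans ht) k).symm) measurableSet_Ioi

lemma integral_exp_neg_div_self_nonneg {a : ℝ} (ha : 0 ≤ a) :
    0 ≤ ∫ u in Ioi a, exp (-u) / u :=
  setIntegral_nonneg measurableSet_Ioi fun _ hu => div_nonneg (exp_pos _).le (ha.trans hu.le)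

lemma integral_exp_neg_div_self_le {a : ℝ} (ha : 0 < a) :
    ∫ u in Ioi a, exp (-u) / u ≤ exp (-a) / a := by
  rw [← integral_exp_neg_Ioi a, ← integral_div]
  refine integral_mono_of_nonneg ?_ ((integrableOn_exp_neg_Ioi a).div_const a) ?_
  · filter_upwards [ae_restrict_mem measurableSet_Ioi] with u hu
    exact div_nonneg (exp_pos _).le (ha.trans hu).le
  · filter_upwards [ae_restrict_mem measurableSet_Ioi] with u hu
    exact div_le_div_of_nonneg_left (exp_pos _).le ha (le_of_lt hu)

lemma summable_integral_exp_neg_div_self {c : ℝ} (hc : 0 < c) :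
    Summable fun n : ℕ => ∫ u in Ioi (c * (n + 1)), exp (-u) / u := by
  refine Summable.of_nonneg_of_le (fun n => integral_exp_neg_div_self_nonneg (by positivity))
    (fun n => ?_) ((summable_geometric_of_lt_one (exp_pos (-c)).le
      (exp_lt_one_iff.2 (neg_lt_zero.2 hc))).mul_left (exp (-c) / c))
  have hc_le : c ≤ c * (n + 1) :=
    le_mul_of_one_le_right hc.le (by linarith [n.cast_nonneg (α := ℝ)])
  calc _ ≤ exp (-(c * (n + 1))) / (c * (n + 1)) := integral_exp_neg_div_self_le (by positivity)
    _ ≤ exp (-(c * (n + 1))) / c := div_le_div_of_nonneg_left (exp_pos _).le hc hc_le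
    _ = exp (-c) / c * exp (-c) ^ n := by
      rw [← exp_nat_mul, div_mul_eq_mul_div, ← exp_add]
      ring_nf

/-- For `x > 1`,
`∫_x^∞ dt/(t (t²-1) log t) = ∑_{n=1}^∞ ∫_{2n log x}^∞ e^{-u}/u du`,
and the series on the right converges. -/
theorem integral_eq_sum_incGamma (x : ℝ) (hx : 1 < x) :
    Summable (fun n : ℕ =>
      ∫ u in Set.Ioi (2 * ((n : ℝ) + 1) * Real.log x), Real.exp (-u) / u) ∧
    (∫ t in Set.Ioi x, 1 / (t * (t ^ 2 - 1) * Real.log t)) =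
      ∑' n : ℕ, ∫ u in Set.Ioi (2 * ((n : ℝ) + 1) * Real.log x), Real.exp (-u) / u := by
  have hterm (n : ℕ) : ∫ t in Ioi x, 1 / (t ^ (2 * n + 3) * log t) =
      ∫ u in Ioi (2 * ((n : ℝ) + 1) * log x), exp (-u) / u := by
    rw [integral_Ioi_one_div_pow_succ_mul_log (zero_lt_one.trans hx) (k := 2 * n + 2) (by omega)]
    push_cast
    ring_nf
  have hsum : Summable fun n : ℕ => ∫ u in Ioi (2 * ((n : ℝ) + 1) * log x), exp (-u) / u :=
    (summable_integral_exp_neg_div_self (mul_pos two_pos (log_pos hx))).congr fun n => by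
      rw [mul_right_comm]
  have hint_norm (n : ℕ) : ∫ t in Ioi x, ‖1 / (t ^ (2 * n + 3) * log t)‖ =
      ∫ t in Ioi x, 1 / (t ^ (2 * n + 3) * log t) :=
    setIntegral_congr_fun measurableSet_Ioi fun t ht => norm_of_nonneg <| one_div_nonneg.2 <|
      mul_nonneg (pow_nonneg (zero_lt_one.trans (hx.trans ht)).le _) (log_nonneg (hx.trans ht).le)
  refine ⟨hsum, ?_⟩
  calc ∫ t in Ioi x, 1 / (t * (t ^ 2 - 1) * log t)
      = ∫ t in Ioi x, ∑' n : ℕ, 1 / (t ^ (2 * n + 3) * log t) := by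
        refine setIntegral_congr_fun measurableSet_Ioi fun t ht => ?_
        have ht2 : 1 < t ^ 2 := one_lt_pow₀ (hx.trans ht) two_ne_zero
        simpa only [div_div] using ((hasSum_one_div_pow_odd ht2).div_const (log t)).tsum_eq.symm
    _ = ∑' n : ℕ, ∫ t in Ioi x, 1 / (t ^ (2 * n + 3) * log t) :=
        (integral_tsum_of_summable_integral_norm
          (fun n => integrableOn_one_div_pow_succ_mul_log hx (k := 2 * n + 2) (by omega))
          (hsum.congr fun n => by rw [hint_norm, hterm])).symm
    _ = ∑' n : ℕ, ∫ u in Ioi (2 * ((n : ℝ) + 1) * log x), exp (-u) / u := tsum_congr hterm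
end
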